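/- arXiv:2302.06974 — 7 statements merged into one kernel-verified Lean document; each statement's English description precedes it below -/
import Mathlib

section
/- For every integer n, the group BS(1,n) has commutator width 1; that is, every element of the derived subgroup of BS(1,n) is a single commutator. -/
/-!
Put `r p = t^p a t^{-p}`, so that `t⁻¹ (r p) t = (r p)^n` and `r p = (r (p+1))^n`. The subgroup
`K = ⋃ₚ ⟨(r p)^(n-1)⟩` is then an increasing union, normalised by `t` (which shifts `p`) and by `a`
(all `r p` commute), and it contains `⁅a, t⁆`; as `a` and `t` generate, `BS(1,n) ⧸ K` is abelian,
so the derived subgroup lies in `K`. Conversely every element of `K` is a single commutator: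
`(r p)^((n-1)k) = ⁅t⁻¹, (r p)^k⁆`.
-/

/-- Relators of the Baumslag–Solitar group BS(1,n) = ⟨a,t | t⁻¹ a t = aⁿ⟩,
with `false` standing for `a` and `true` for `t`. -/
def BSrels (n : ℤ) : Set (FreeGroup Bool) :=
  {(FreeGroup.of true)⁻¹ * FreeGroup.of false * FreeGroup.of true *
    (FreeGroup.of false ^ n)⁻¹}

/-- The Baumslag–Solitar group BS(1,n). -/
abbrev BS (n : ℤ) := PresentedGroup (BSrels n)

open scoped commutatorElement

theorem Subgroup.Normal.commutator_le_of_closure_pair_eq_top {G : Type*} [Group G]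
    {N : Subgroup G} [N.Normal] {x y : G} (hxy : Subgroup.closure {x, y} = ⊤)
    (hN : ⁅x, y⁆ ∈ N) : _root_.commutator G ≤ N := by
  rw [← Subgroup.Normal.quotient_commutative_iff_commutator_le]
  set f := QuotientGroup.mk' N
  have hcomm : f x * f y = f y * f x := by
    rwa [← commutatorElement_eq_one_iff_mul_comm, ← map_commutatorElement,
      QuotientGroup.mk'_apply, QuotientGroup.eq_one_iff]
  have hclosure : Subgroup.closure {f x, f y} = ⊤ := by
    rw [← Set.image_pair, ← MonoidHom.map_closure, hxy, ← MonoidHom.range_eq_map,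
      MonoidHom.range_eq_top]
    exact QuotientGroup.mk'_surjective N
  have : IsMulCommutative (Subgroup.closure {f x, f y}) :=
    Subgroup.isMulCommutative_closure <| by
      rintro _ (rfl | rfl) _ (rfl | rfl) <;> first | rfl | exact hcomm | exact hcomm.symm
  refine ⟨⟨fun u v => congrArg Subtype.val (mul_comm' (⟨u, ?_⟩ : Subgroup.closure {f x, f y})
    ⟨v, ?_⟩)⟩⟩ <;> simp [hclosure]

namespace BS

variable (n : ℤ)

def a : BS n := PresentedGroup.of false

def t : BS n := PresentedGroup.of true

/-- In `BS n ≅ ℤ[1/n] ⋊ ℤ` this is `n^(-p)`, an `n^p`-th root of `a` for `p ≥ 0`. -/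
def root (p : ℤ) : BS n := t n ^ p * a n * (t n ^ p)⁻¹

/-- In `BS n ≅ ℤ[1/n] ⋊ ℤ` this is `(n - 1) ℤ[1/n]`, which turns out to be the derived subgroup. -/
def K : Subgroup (BS n) := ⨆ p : ℤ, Subgroup.zpowers (root n p ^ (n - 1))

variable {n}

theorem closure_a_t_eq_top : Subgroup.closure {a n, t n} = ⊤ := by
  rw [← PresentedGroup.closure_range_of]
  congr 1
  ext
  simp [a, t]

theorem t_inv_mul_a_mul_t : (t n)⁻¹ * a n * t n = a n ^ n := by
  have h := PresentedGroup.mk_eq_mk_of_mul_inv_mem (rels := BSrels n) (Set.mem_singleton _)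
  simp only [map_mul, map_inv, map_zpow] at h
  exact h

theorem root_zero : root n 0 = a n := by
  simp [root]

theorem t_zpow_mul_root_mul_t_zpow_inv (j p : ℤ) :
    t n ^ j * root n p * (t n ^ j)⁻¹ = root n (p + j) := by
  simp only [root, zpow_add]
  group

theorem t_inv_mul_root_mul_t (p : ℤ) : (t n)⁻¹ * root n p * t n = root n p ^ n := by
  calc (t n)⁻¹ * root n p * t n = t n ^ p * ((t n)⁻¹ * a n * t n) * (t n ^ p)⁻¹ := by
        simp only [root]; group
    _ = root n p ^ n := by rw [t_inv_mul_a_mul_t, root, conj_zpow]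

theorem t_inv_mul_root_zpow_mul_t (p k : ℤ) :
    (t n)⁻¹ * root n p ^ k * t n = root n p ^ (n * k) := by
  have h := conj_zpow (a := (t n)⁻¹) (b := root n p) (i := k)
  rwa [inv_inv, t_inv_mul_root_mul_t, ← zpow_mul, eq_comm] at h

theorem root_eq_root_add_one_zpow (p : ℤ) : root n p = root n (p + 1) ^ n := by
  rw [← t_inv_mul_root_mul_t, ← t_zpow_mul_root_mul_t_zpow_inv 1, zpow_one]
  group

theorem exists_root_eq_zpow_of_le {p q : ℤ} (h : p ≤ q) : ∃ m : ℤ, root n p = root n q ^ m := by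
  induction q, h using Int.leInduction with
  | base => exact ⟨1, (zpow_one _).symm⟩
  | succ q _ ih =>
    obtain ⟨m, hm⟩ := ih
    exact ⟨n * m, by rw [hm, root_eq_root_add_one_zpow q, ← zpow_mul]⟩

theorem commute_root (p q : ℤ) : Commute (root n p) (root n q) := by
  obtain ⟨m₁, h₁⟩ := exists_root_eq_zpow_of_le (n := n) (le_max_left p q)
  obtain ⟨m₂, h₂⟩ := exists_root_eq_zpow_of_le (n := n) (le_max_right p q)
  rw [h₁, h₂]
  exact Commute.zpow_zpow_self _ _ _

theorem commutatorElement_t_inv_root_zpow (p k : ℤ) :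
    ⁅(t n)⁻¹, root n p ^ k⁆ = root n p ^ ((n - 1) * k) := by
  rw [commutatorElement_def, inv_inv, t_inv_mul_root_zpow_mul_t, ← zpow_neg, ← zpow_add]
  ring_nf

theorem mem_K {g : BS n} : g ∈ K n ↔ ∃ p k : ℤ, root n p ^ ((n - 1) * k) = g := by
  have hmono : Monotone fun p => Subgroup.zpowers (root n p ^ (n - 1)) :=
    monotone_int_of_le_succ fun p => by
      rw [Subgroup.zpowers_le, root_eq_root_add_one_zpow p, ← zpow_mul, mul_comm, zpow_mul]
      exact Subgroup.zpow_mem_zpowers _ _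
  simp only [K, Subgroup.mem_iSup_of_directed hmono.directed_le, Subgroup.mem_zpowers_iff,
    ← zpow_mul]

instance K_normal : (K n).Normal := by
  rw [← Subgroup.normalizer_eq_top_iff, eq_top_iff, ← closure_a_t_eq_top, Subgroup.closure_le,
    Set.insert_subset_iff, Set.singleton_subset_iff]
  constructor
  · refine Subgroup.centralizer_le_normalizer _ (Subgroup.mem_centralizer_iff.2 ?_)
    rintro _ hg
    obtain ⟨p, k, rfl⟩ := mem_K.1 hg
    rw [← root_zero]
    exact ((commute_root p 0).zpow_left _).eq
  · refine Subgroup.mem_normalizer_iff.2 fun g => ⟨fun hg => ?_, fun hg => ?_⟩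
    · obtain ⟨p, k, rfl⟩ := mem_K.1 hg
      refine mem_K.2 ⟨p + 1, k, ?_⟩
      rw [← conj_zpow, ← t_zpow_mul_root_mul_t_zpow_inv 1, zpow_one]
    · obtain ⟨p, k, hg⟩ := mem_K.1 hg
      refine mem_K.2 ⟨p - 1, k, ?_⟩
      have h := t_zpow_mul_root_mul_t_zpow_inv (n := n) (-1) p
      rw [← sub_eq_add_neg] at h
      rw [← h, conj_zpow, hg]
      group

theorem commutator_le_K : commutator (BS n) ≤ K n := by
  refine Subgroup.Normal.commutator_le_of_closure_pair_eq_top closure_a_t_eq_top ?_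
  have h := commutatorElement_t_inv_root_zpow (n := n) 0 1
  rw [zpow_one, root_zero] at h
  have h' : ⁅a n, t n⁆ = t n * ⁅(t n)⁻¹, a n⁆ * (t n)⁻¹ := by
    simp only [commutatorElement_def]; group
  rw [h', h]
  exact K_normal.conj_mem _ (mem_K.2 ⟨0, 1, rfl⟩) _

end BS

/-- BS(1,n) has commutator width 1: every element of the derived subgroup is a
single commutator. -/
theorem stmt_3 (n : ℤ) (g : BS n) (hg : g ∈ commutator (BS n)) :
    ∃ x y : BS n, g = ⁅x, y⁆ := by
  obtain ⟨p, k, rfl⟩ := BS.mem_K.1 (BS.commutator_le_K hg)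
  exact ⟨(BS.t n)⁻¹, BS.root n p ^ k, (BS.commutatorElement_t_inv_root_zpow p k).symm⟩
end

section
/- Let n be an integer with |n| > 1, let α be a nonzero integer, u a natural number, and y an integer. Then the element (α n^{-u}, y) of BS(1,n) ≅ ℤ[1/n] ⋊ ℤ can be represented by a word on generators {a, t} of length less than 2|n|(1 + log_{|n|}|α|) + 2u + |y|. -/
/-- Multiplication in ℤ[1/n] ⋊ ℤ ≅ BS(1,n) (realized inside ℚ × ℤ):
`(α₁,β₁)(α₂,β₂) = (α₁ + n^{-β₁}α₂, β₁+β₂)`. -/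
def bsMul (n : ℤ) (p q : ℚ × ℤ) : ℚ × ℤ :=
  (p.1 + (n : ℚ) ^ (-p.2) * q.1, p.2 + q.2)

/-- The generators `a = (1,0)`, `t = (0,1)` of BS(1,n) and their inverses. -/
def bsLetters : Set (ℚ × ℤ) := {(1, 0), (-1, 0), (0, 1), (0, -1)}

/-!
Write `|α| = ∑ dᵢ bⁱ` in base `b = |n|` and put `εᵢ = sign α · (sign n)ⁱ`, so that
`α = ∑ εᵢ dᵢ nⁱ`. Since `a^x t⁻¹ (v, 0) t = (x + n v, 0)`, Horner's scheme gives the word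
`a^{ε₀d₀} t⁻¹ a^{ε₁d₁} t⁻¹ ⋯ t t` for `(α, 0)`, of length `∑ dᵢ + 2·#digits`, and
`t^u (α, 0) t^{y-u} = (α n^{-u}, y)`. With `dᵢ ≤ b - 1` and `#digits ≤ 1 + log_b |α|`
this costs at most `(b + 1)(1 + log_b |α|) + 2u + |y|`, and `b + 1 < 2b`.
-/

theorem Int.natAbs_sign_le_one (a : ℤ) : a.sign.natAbs ≤ 1 := by
  rw [Int.natAbs_sign]; split <;> simp

theorem Int.sign_eq_one_or_eq_neg_one {a : ℤ} (ha : a ≠ 0) : a.sign = 1 ∨ a.sign = -1 := by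
  simpa using Int.natAbs_eq_iff.mp (Int.natAbs_sign_of_ne_zero ha)

namespace Nat

theorem sum_digits_le_mul_length {b : ℕ} (hb : 1 < b) (m : ℕ) :
    (b.digits m).sum ≤ (b - 1) * (b.digits m).length := by
  simpa [mul_comm] using List.sum_le_card_nsmul _ (b - 1)
    fun d hd => Nat.le_sub_one_of_lt (Nat.digits_lt_base hb hd)

theorem length_digits_le_one_add_logb {b : ℕ} (hb : 1 < b) (m : ℕ) :
    ((b.digits m).length : ℝ) ≤ 1 + Real.logb b m := by
  rcases eq_or_ne m 0 with rfl | hm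
  · simp
  · rw [Nat.length_digits b m hb hm, add_comm 1]
    push_cast
    linarith [Real.natLog_le_logb m b]

theorem sum_digits_add_two_mul_length_lt {b : ℕ} (hb : 1 < b) (m : ℕ) :
    ((b.digits m).sum + 2 * (b.digits m).length : ℝ) < 2 * b * (1 + Real.logb b m) := by
  have hsum : ((b.digits m).sum : ℝ) ≤ (b - 1) * (b.digits m).length := by
    have : ((b.digits m).sum : ℝ) ≤ ((b - 1) * (b.digits m).length : ℕ) := by
      exact_mod_cast sum_digits_le_mul_length hb m
    rwa [Nat.cast_mul, Nat.cast_sub hb.le, Nat.cast_one] at this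
  have hlen := length_digits_le_one_add_logb hb m
  have hlog : 0 ≤ Real.logb b m :=
    div_nonneg (Real.log_natCast_nonneg m) (Real.log_natCast_nonneg b)
  have hb' : (2 : ℝ) ≤ b := by exact_mod_cast hb
  nlinarith

end Nat

namespace BaumslagSolitar

variable {n : ℤ}

def eval (n : ℤ) (w : List (ℚ × ℤ)) : ℚ × ℤ := w.foldr (bsMul n) (0, 0)

theorem bsMul_assoc (hn : n ≠ 0) (p q r : ℚ × ℤ) :
    bsMul n (bsMul n p q) r = bsMul n p (bsMul n q r) := by
  simp only [bsMul, Prod.mk.injEq]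
  refine ⟨?_, by ring⟩
  rw [neg_add, zpow_add₀ (Int.cast_ne_zero.mpr hn)]
  ring

theorem eval_append (hn : n ≠ 0) (w₁ w₂ : List (ℚ × ℤ)) :
    eval n (w₁ ++ w₂) = bsMul n (eval n w₁) (eval n w₂) := by
  induction w₁ with
  | nil => simp [eval, bsMul]
  | cons x w ih =>
    simp only [eval, List.cons_append, List.foldr_cons] at ih ⊢
    rw [ih, bsMul_assoc hn]

theorem eval_cons (x : ℚ × ℤ) (w : List (ℚ × ℤ)) : eval n (x :: w) = bsMul n x (eval n w) := rfl

def aPow (m : ℤ) : List (ℚ × ℤ) := List.replicate m.natAbs (m.sign, 0)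

def tPow (m : ℤ) : List (ℚ × ℤ) := List.replicate m.natAbs (0, m.sign)

theorem length_aPow (m : ℤ) : (aPow m).length = m.natAbs := List.length_replicate

theorem length_tPow (m : ℤ) : (tPow m).length = m.natAbs := List.length_replicate

theorem eval_aPow (m : ℤ) : eval n (aPow m) = ((m : ℚ), 0) := by
  suffices ∀ (k : ℕ) (c : ℚ), eval n (List.replicate k (c, 0)) = (c * k, 0) by
    rw [aPow, this, Nat.cast_natAbs, ← Int.cast_mul, Int.sign_mul_abs]
  intro k c
  induction k with
  | zero => simp [eval]
  | succ k ih =>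
    rw [List.replicate_succ, eval_cons, ih]
    simp only [bsMul, neg_zero, zpow_zero, one_mul, add_zero, Nat.cast_add, Nat.cast_one,
      Prod.mk.injEq, and_true]
    ring

theorem eval_tPow (m : ℤ) : eval n (tPow m) = (0, m) := by
  suffices ∀ (k : ℕ) (c : ℤ), eval n (List.replicate k ((0 : ℚ), c)) = (0, k * c) by
    rw [tPow, this, mul_comm, Int.sign_mul_natAbs]
  intro k c
  induction k with
  | zero => simp [eval]
  | succ k ih =>
    rw [List.replicate_succ, eval_cons, ih]
    simp only [bsMul, zpow_neg, mul_zero, add_zero, Nat.cast_add, Nat.cast_one, Prod.mk.injEq,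
      true_and]
    ring

theorem aPow_subset_bsLetters (m : ℤ) : ∀ x ∈ aPow m, x ∈ bsLetters := by
  simp only [aPow, List.mem_replicate]
  rintro x ⟨hm, rfl⟩
  rcases Int.sign_eq_one_or_eq_neg_one (Int.natAbs_ne_zero.mp hm) with h | h <;> simp [h, bsLetters]

theorem tPow_subset_bsLetters (m : ℤ) : ∀ x ∈ tPow m, x ∈ bsLetters := by
  simp only [tPow, List.mem_replicate]
  rintro x ⟨hm, rfl⟩
  rcases Int.sign_eq_one_or_eq_neg_one (Int.natAbs_ne_zero.mp hm) with h | h <;> simp [h, bsLetters]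

theorem aPow_tInv_mul_t (x v : ℚ) :
    bsMul n (bsMul n (x, 0) (bsMul n (0, -1) (v, 0))) (eval n [(0, 1)]) = (x + n * v, 0) := by
  simp [eval, bsMul]

def signedDigitWord (n : ℤ) : ℤ → List ℕ → List (ℚ × ℤ)
  | _, [] => []
  | s, d :: ds => aPow (s * d) ++ (0, -1) :: signedDigitWord n (s * n.sign) ds ++ [(0, 1)]

theorem eval_signedDigitWord (hn : n ≠ 0) (s : ℤ) (ds : List ℕ) :
    eval n (signedDigitWord n s ds) = (((s * Nat.ofDigits n.natAbs ds : ℤ) : ℚ), 0) := by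
  induction ds generalizing s with
  | nil => simp [signedDigitWord, eval]
  | cons d ds ih =>
    rw [signedDigitWord, eval_append hn, eval_append hn, eval_cons, eval_aPow, ih,
      aPow_tInv_mul_t]
    have hsign : (n : ℚ) * n.sign = |(n : ℚ)| := by
      exact_mod_cast (mul_comm _ _).trans (Int.sign_mul_self_eq_abs n)
    rw [Prod.mk.injEq, Nat.ofDigits_cons]
    refine ⟨?_, rfl⟩
    generalize Nat.ofDigits n.natAbs ds = k
    push_cast
    linear_combination (s * k : ℚ) * hsign

theorem signedDigitWord_subset_bsLetters (s : ℤ) (ds : List ℕ) :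
    ∀ x ∈ signedDigitWord n s ds, x ∈ bsLetters := by
  induction ds generalizing s with
  | nil => simp [signedDigitWord]
  | cons d ds ih =>
    simp only [signedDigitWord, List.mem_append, List.mem_cons, List.not_mem_nil, or_false]
    rintro x ((hx | rfl | hx) | rfl)
    · exact aPow_subset_bsLetters _ x hx
    · simp [bsLetters]
    · exact ih _ x hx
    · simp [bsLetters]

theorem length_signedDigitWord_le (s : ℤ) (hs : s.natAbs ≤ 1) (ds : List ℕ) :
    (signedDigitWord n s ds).length ≤ ds.sum + 2 * ds.length := by
  induction ds generalizing s with
  | nil => simp [signedDigitWord]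
  | cons d ds ih =>
    have hs' : (s * n.sign).natAbs ≤ 1 := by
      rw [Int.natAbs_mul]
      simpa using Nat.mul_le_mul hs (Int.natAbs_sign_le_one n)
    have := ih _ hs'
    simp only [signedDigitWord, List.length_append, List.length_cons, length_aPow, Int.natAbs_mul,
      Int.natAbs_natCast, List.sum_cons, List.length_nil]
    nlinarith

end BaumslagSolitar

open BaumslagSolitar in
theorem stmt_6_general (n : ℤ) (hn : 1 < |n|) (α : ℤ) (u : ℕ) (y : ℤ) :
    ∃ w : List (ℚ × ℤ), (∀ x ∈ w, x ∈ bsLetters) ∧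
      w.foldr (bsMul n) (0, 0) = ((α : ℚ) * (n : ℚ) ^ (-(u : ℤ)), y) ∧
      (w.length : ℝ) <
        2 * (|n| : ℝ) * (1 + Real.logb (|n| : ℝ) (|α| : ℝ)) +
          2 * (u : ℝ) + (|y| : ℝ) := by
  have hn0 : n ≠ 0 := by rintro rfl; simp at hn
  have hb : 1 < n.natAbs := by rw [Int.abs_eq_natAbs] at hn; omega
  set ds := n.natAbs.digits α.natAbs
  refine ⟨tPow u ++ signedDigitWord n α.sign ds ++ tPow (y - u), ?_, ?_, ?_⟩
  · simp only [List.mem_append]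
    rintro x ((hx | hx) | hx)
    exacts [tPow_subset_bsLetters _ x hx, signedDigitWord_subset_bsLetters _ _ x hx,
      tPow_subset_bsLetters _ x hx]
  · change eval n _ = _
    rw [eval_append hn0, eval_append hn0, eval_tPow, eval_tPow, eval_signedDigitWord hn0,
      Nat.ofDigits_digits, Int.sign_mul_natAbs]
    simp [bsMul, mul_comm]
  · have hword := length_signedDigitWord_le (n := n) α.sign (Int.natAbs_sign_le_one α) ds
    have hdigits := Nat.sum_digits_add_two_mul_length_lt hb α.natAbs
    have hlen : ((tPow u ++ signedDigitWord n α.sign ds ++ tPow (y - u)).length : ℝ) ≤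
        (ds.sum + 2 * ds.length : ℕ) + 2 * u + y.natAbs := by
      rw [List.length_append, List.length_append, length_tPow, length_tPow, Int.natAbs_natCast]
      exact_mod_cast (by omega : _ ≤ ds.sum + 2 * ds.length + 2 * u + y.natAbs)
    simp only [Nat.cast_natAbs, Int.cast_abs, Nat.cast_add, Nat.cast_mul, Nat.cast_ofNat]
      at hdigits hlen ⊢
    linarith

/-- For `|n| > 1`, `α` a nonzero integer, `u : ℕ` and `y : ℤ`, the element
`(α n^{-u}, y)` of BS(1,n) ≅ ℤ[1/n] ⋊ ℤ can be written as a word on `{a, t}` of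
length less than `2|n|(1 + log_{|n|}|α|) + 2u + |y|`. -/
theorem stmt_6 (n : ℤ) (hn : 1 < |n|) (α : ℤ) (hα : α ≠ 0) (u : ℕ) (y : ℤ) :
    ∃ w : List (ℚ × ℤ), (∀ x ∈ w, x ∈ bsLetters) ∧
      w.foldr (bsMul n) (0, 0) = ((α : ℚ) * (n : ℚ) ^ (-(u : ℤ)), y) ∧
      (w.length : ℝ) <
        2 * (|n| : ℝ) * (1 + Real.logb (|n| : ℝ) (|α| : ℝ)) +
          2 * (u : ℝ) + (|y| : ℝ) :=
  stmt_6_general n hn α u y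
end

section
/- Let q₁, ..., q_k be integers and α a rational number with |α| > 1. If the equation q₁α^{x₁} + ... + q_kα^{x_k} = 0 has a solution in integers x₁,...,x_k, then it has a solution satisfying 0 ≤ x_i ≤ Σ_{j=1}^k log_{|α|}(|q_j| + 1) for all i. -/
/-!
Descent on `∑ xᵢ` gives a solution in natural numbers without a *vanishing cut*: a level
`0 < g ≤ max xᵢ` at which the terms with `xᵢ < g` already sum to zero (otherwise every exponent
`≥ g` can be lowered by one). In such a solution the lower part `∑_{xᵢ<g} qᵢ α^{xᵢ}` is nonzero
and equals minus the upper part, so writing `α = a / b` in lowest terms, `a^g` divides the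
nonzero integer `b^g ∑_{xᵢ<g} qᵢ α^{xᵢ}`; hence `|α|^g ≤ ∑_{xᵢ<g} |qᵢ| |α|^{xᵢ}`. Induction
on `g` turns this into `|α|^g ≤ ∏_{xⱼ<g} (|qⱼ| + 1)`, and taking `log_{|α|}` gives the bound.
-/

open Finset

namespace Rat

theorem den_pow_mul_pow {α : ℚ} {e N : ℕ} (h : e ≤ N) :
    (α.den : ℚ) ^ N * α ^ e = ((α.num ^ e * (α.den : ℤ) ^ (N - e) : ℤ) : ℚ) := by
  obtain ⟨t, rfl⟩ := Nat.exists_eq_add_of_le h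
  have hden : (α.den : ℚ) ≠ 0 := by positivity
  have hpow : α ^ e = (α.num : ℚ) ^ e / (α.den : ℚ) ^ e := by rw [← div_pow, α.num_div_den]
  rw [hpow, Nat.add_sub_cancel_left]
  push_cast
  field_simp
  ring

theorem den_pow_mul_sum_pow {ι : Type*} (α : ℚ) (s : Finset ι) (c : ι → ℤ) (e : ι → ℕ) {N : ℕ}
    (he : ∀ i ∈ s, e i ≤ N) :
    (α.den : ℚ) ^ N * ∑ i ∈ s, c i * α ^ e i
      = ((∑ i ∈ s, c i * (α.num ^ e i * (α.den : ℤ) ^ (N - e i)) : ℤ) : ℚ) := by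
  push_cast [mul_sum]
  refine sum_congr rfl fun i hi => ?_
  rw [mul_left_comm, den_pow_mul_pow (he i hi)]
  push_cast
  rfl

/-- Since `num` and `den` are coprime, `num ^ g` divides the nonzero integer `den ^ g * r`. -/
theorem abs_pow_le_abs_of_num_pow_dvd {α r : ℚ} {g N : ℕ} {d D : ℤ} (hr : r ≠ 0)
    (hd : (d : ℚ) = α.den ^ g * r) (hD : ((α.num ^ g * D : ℤ) : ℚ) = α.den ^ N * r) :
    |α| ^ g ≤ |r| := by
  have hden : (0 : ℚ) < α.den := by positivity
  have hdvd : α.num ^ g ∣ (α.den : ℤ) ^ N * d := ⟨D * α.den ^ g, by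
    have : ((α.den ^ N * d : ℤ) : ℚ) = ((α.num ^ g * (D * α.den ^ g) : ℤ) : ℚ) := by
      push_cast at hD ⊢
      rw [hd, ← mul_assoc, mul_right_comm, ← hD]
      ring
    exact_mod_cast this⟩
  have hcop : IsCoprime α.num α.den := Int.isCoprime_iff_gcd_eq_one.mpr α.reduced
  have hnum_dvd : α.num ^ g ∣ d := hcop.pow.dvd_of_dvd_mul_left hdvd
  have hd0 : d ≠ 0 := by
    rintro rfl
    exact hr (by simpa [hden.ne'] using hd.symm)
  have hle : |α.num| ^ g ≤ |d| := by
    rw [← abs_pow]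
    exact Int.le_of_dvd (abs_pos.mpr hd0) ((abs_dvd_abs _ _).mpr hnum_dvd)
  have hle' : (|α.num| : ℚ) ^ g ≤ α.den ^ g * |r| := by
    rw [← abs_of_pos (pow_pos hden g), ← abs_mul, ← hd]
    exact_mod_cast hle
  rw [← α.num_div_den, abs_div, abs_of_pos hden, div_pow, div_le_iff₀ (pow_pos hden g)]
  linarith

end Rat

theorem abs_pow_le_abs_sum_filter_lt {ι : Type*} {α : ℚ} {s : Finset ι} {c : ι → ℤ} {e : ι → ℕ}
    {g : ℕ} (hsum : ∑ i ∈ s, c i * α ^ e i = 0)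
    (hne : ∑ i ∈ s with e i < g, c i * α ^ e i ≠ 0) :
    |α| ^ g ≤ |∑ i ∈ s with e i < g, c i * α ^ e i| := by
  set N := s.sup e
  have hhigh_dvd : α.num ^ g ∣
      ∑ i ∈ s with ¬e i < g, c i * (α.num ^ e i * (α.den : ℤ) ^ (N - e i)) :=
    dvd_sum fun i hi => by
      have hgi : g ≤ e i := not_lt.mp (mem_filter.mp hi).2
      exact Dvd.dvd.mul_left ((pow_dvd_pow _ hgi).mul_right _) _
  obtain ⟨D, hD⟩ := hhigh_dvd
  refine Rat.abs_pow_le_abs_of_num_pow_dvd (N := N) (D := -D) hne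
    (Rat.den_pow_mul_sum_pow α _ c e fun i hi => (mem_filter.mp hi).2.le).symm ?_
  have hsplit := sum_filter_add_sum_filter_not s (fun i => e i < g) fun i => c i * α ^ e i
  rw [hsum, ← eq_neg_iff_add_eq_zero] at hsplit
  rw [hsplit, mul_neg, mul_neg,
    Rat.den_pow_mul_sum_pow (N := N) α _ c e fun i hi => le_sup (mem_filter.mp hi).1, hD]
  push_cast
  ring

/-- Listing `s` in increasing order of `f`, `∏ (wᵢ + 1) = 1 + ∑ⱼ wⱼ ∏_{i before j} (wᵢ + 1)`;
ties between values of `f` only shrink the left-hand side. -/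
theorem sum_mul_prod_filter_lt_le_prod_add_one {ι κ R : Type*} [DecidableEq ι] [LinearOrder κ]
    [CommSemiring R] [PartialOrder R] [IsOrderedRing R] (f : ι → κ) {w : ι → R} (s : Finset ι)
    (hw : ∀ i ∈ s, 0 ≤ w i) :
    ∑ j ∈ s, w j * ∏ i ∈ s with f i < f j, (w i + 1) ≤ ∏ i ∈ s, (w i + 1) := by
  induction s using Finset.induction_on_max_value f with
  | empty => simp
  | insert m s hm hmax ih =>
    have hw' : ∀ i ∈ s, 0 ≤ w i := fun i hi => hw i (mem_insert_of_mem hi)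
    have hprod_le : ∏ i ∈ insert m s with f i < f m, (w i + 1) ≤ ∏ i ∈ s, (w i + 1) := by
      refine prod_le_prod_of_subset_of_one_le (fun i hi => ?_) (fun i hi => ?_) fun i hi _ => ?_
      · obtain ⟨hi, hlt⟩ := mem_filter.mp hi
        exact (mem_insert.mp hi).resolve_left (by rintro rfl; exact lt_irrefl _ hlt)
      · exact add_nonneg (hw i (mem_filter.mp hi).1) zero_le_one
      · exact le_add_of_nonneg_left (hw' i hi)
    have hfilter : ∀ j ∈ s, {i ∈ insert m s | f i < f j} = {i ∈ s | f i < f j} := fun j hj => by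
      rw [filter_insert, if_neg (not_lt.mpr (hmax j hj))]
    calc ∑ j ∈ insert m s, w j * ∏ i ∈ insert m s with f i < f j, (w i + 1)
        = w m * ∏ i ∈ insert m s with f i < f m, (w i + 1)
          + ∑ j ∈ s, w j * ∏ i ∈ s with f i < f j, (w i + 1) := by
          rw [sum_insert hm]
          congr 1
          exact sum_congr rfl fun j hj => by rw [hfilter j hj]
      _ ≤ w m * ∏ i ∈ s, (w i + 1) + ∏ i ∈ s, (w i + 1) := by
          gcongr
          · exact hw m (mem_insert_self m s)
          · exact ih hw'
      _ = ∏ i ∈ insert m s, (w i + 1) := by rw [prod_insert hm]; ring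

section Solutions

variable {ι : Type*} [Fintype ι] (q : ι → ℤ) (α : ℚ)

def IsVanishingCut (y : ι → ℕ) (g : ℕ) : Prop :=
  0 < g ∧ (∃ i, g ≤ y i) ∧ ∑ i with y i < g, (q i : ℚ) * α ^ y i = 0

variable {q α}

theorem IsVanishingCut.sum_mul_pow_ite_eq_zero {y : ι → ℕ} {g : ℕ}
    (hcut : IsVanishingCut q α y g) (hα : α ≠ 0) (hy : ∑ i, (q i : ℚ) * α ^ y i = 0) :
    ∑ i, (q i : ℚ) * α ^ (if y i < g then y i else y i - 1) = 0 := by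
  obtain ⟨hg, -, hlow⟩ := hcut
  have hhigh : ∑ i with ¬y i < g, (q i : ℚ) * α ^ y i = 0 := by
    rw [← hy, ← sum_filter_add_sum_filter_not univ (fun i => y i < g), hlow, zero_add]
  rw [← sum_filter_add_sum_filter_not univ (fun i => y i < g)]
  have hlow' : ∑ i with y i < g, (q i : ℚ) * α ^ (if y i < g then y i else y i - 1) = 0 := by
    rw [← hlow]
    exact sum_congr rfl fun i hi => by rw [if_pos (mem_filter.mp hi).2]
  have hhigh' : (∑ i with ¬y i < g, (q i : ℚ) * α ^ (if y i < g then y i else y i - 1)) * α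
      = 0 := by
    rw [← hhigh, sum_mul]
    refine sum_congr rfl fun i hi => ?_
    have hgi := (mem_filter.mp hi).2
    rw [if_neg hgi, mul_assoc, ← pow_succ, Nat.sub_add_cancel (by omega)]
  rw [hlow', (mul_eq_zero.mp hhigh').resolve_right hα, add_zero]

theorem exists_solution_forall_not_isVanishingCut (hα : α ≠ 0) (y : ι → ℕ)
    (hy : ∑ i, (q i : ℚ) * α ^ y i = 0) :
    ∃ z : ι → ℕ, ∑ i, (q i : ℚ) * α ^ z i = 0 ∧ ∀ g, ¬IsVanishingCut q α z g := by
  induction hn : ∑ i, y i using Nat.strong_induction_on generalizing y with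
  | _ n ih =>
    by_cases hcut : ∃ g, IsVanishingCut q α y g
    · obtain ⟨g, hg⟩ := hcut
      obtain ⟨j, hj⟩ := hg.2.1
      refine ih _ ?_ _ (hg.sum_mul_pow_ite_eq_zero hα hy) rfl
      rw [← hn]
      refine sum_lt_sum (fun i _ => by split_ifs <;> omega) ⟨j, mem_univ j, ?_⟩
      rw [if_neg (by omega)]
      have := hg.1
      omega
    · exact ⟨y, hy, not_exists.mp hcut⟩

theorem abs_pow_le_prod_of_forall_not_isVanishingCut {y : ι → ℕ}
    (hy : ∑ i, (q i : ℚ) * α ^ y i = 0) (hcut : ∀ g, ¬IsVanishingCut q α y g) (g : ℕ)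
    (hg : ∃ i, g ≤ y i) : |α| ^ g ≤ ∏ j with y j < g, ((|q j| : ℚ) + 1) := by
  classical
  induction g using Nat.strong_induction_on with
  | _ g ih =>
    rcases Nat.eq_zero_or_pos g with rfl | hg0
    · simp
    have hlow : ∑ i with y i < g, (q i : ℚ) * α ^ y i ≠ 0 := fun h => hcut g ⟨hg0, hg, h⟩
    calc |α| ^ g ≤ |∑ i with y i < g, (q i : ℚ) * α ^ y i| :=
          abs_pow_le_abs_sum_filter_lt hy hlow
      _ ≤ ∑ j with y j < g, (|q j| : ℚ) * |α| ^ y j := by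
          refine (abs_sum_le_sum_abs _ _).trans_eq (sum_congr rfl fun j _ => ?_)
          rw [abs_mul, abs_pow]
      _ ≤ ∑ j with y j < g, (|q j| : ℚ) * ∏ i with y i < g ∧ y i < y j, ((|q i| : ℚ) + 1) := by
          refine sum_le_sum fun j hj => mul_le_mul_of_nonneg_left ?_ (by positivity)
          have hjg := (mem_filter.mp hj).2
          have hfilter : univ.filter (fun i => y i < g ∧ y i < y j) = univ.filter (y · < y j) :=
            filter_congr fun i _ => ⟨And.right, fun h => ⟨h.trans hjg, h⟩⟩
          rw [hfilter]
          exact ih (y j) hjg ⟨j, le_rfl⟩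
      _ = ∑ j with y j < g,
            (|q j| : ℚ) * ∏ i ∈ {i | y i < g} with y i < y j, ((|q i| : ℚ) + 1) := by
          simp only [filter_filter]
      _ ≤ ∏ j with y j < g, ((|q j| : ℚ) + 1) :=
          sum_mul_prod_filter_lt_le_prod_add_one y _ fun i _ => by positivity

theorem exists_solution_abs_pow_le_prod (hα : α ≠ 0) (y : ι → ℕ)
    (hy : ∑ i, (q i : ℚ) * α ^ y i = 0) :
    ∃ z : ι → ℕ, ∑ i, (q i : ℚ) * α ^ z i = 0 ∧ ∀ i, |α| ^ z i ≤ ∏ j, ((|q j| : ℚ) + 1) := by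
  obtain ⟨z, hz, hcut⟩ := exists_solution_forall_not_isVanishingCut hα y hy
  refine ⟨z, hz, fun i => ?_⟩
  refine (abs_pow_le_prod_of_forall_not_isVanishingCut hz hcut (z i) ⟨i, le_rfl⟩).trans ?_
  exact prod_le_prod_of_subset_of_one_le (filter_subset _ _) (fun j _ => by positivity)
    fun j _ _ => by simp

theorem exists_nat_solution_of_int_solution (hα : α ≠ 0) (x : ι → ℤ)
    (hx : ∑ i, (q i : ℚ) * α ^ x i = 0) : ∃ y : ι → ℕ, ∑ i, (q i : ℚ) * α ^ y i = 0 := by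
  obtain ⟨m, hm⟩ := (Set.finite_range x).bddBelow
  have hxm : ∀ i, m ≤ x i := fun i => hm ⟨i, rfl⟩
  refine ⟨fun i => (x i - m).toNat, ?_⟩
  calc ∑ i, (q i : ℚ) * α ^ (x i - m).toNat = (∑ i, (q i : ℚ) * α ^ x i) * α ^ (-m) := by
        rw [sum_mul]
        refine sum_congr rfl fun i _ => ?_
        rw [mul_assoc, ← zpow_natCast, Int.toNat_of_nonneg (sub_nonneg.mpr (hxm i)),
          ← zpow_add₀ hα, sub_eq_add_neg]
    _ = 0 := by rw [hx, zero_mul]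

end Solutions

theorem natCast_le_sum_logb_of_pow_le_prod {ι : Type*} {β : ℝ} (hβ : 1 < β) {n : ℕ}
    (s : Finset ι) {t : ι → ℝ} (ht : ∀ i ∈ s, 0 ≤ t i) (h : β ^ n ≤ ∏ i ∈ s, (t i + 1)) :
    (n : ℝ) ≤ ∑ i ∈ s, Real.logb β (t i + 1) := by
  rw [← Real.logb_prod s _ fun i hi => by linarith [ht i hi]]
  calc (n : ℝ) = Real.logb β (β ^ n) := by
        rw [Real.logb_pow, Real.logb_self_eq_one hβ, mul_one]
    _ ≤ Real.logb β (∏ i ∈ s, (t i + 1)) :=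
        Real.logb_le_logb_of_le hβ (by positivity) h

/-- If `q₁α^{x₁} + ⋯ + q_kα^{x_k} = 0` (with integer `qᵢ`, rational `α`,
`|α| > 1`) has an integer solution, then it has one with
`0 ≤ xᵢ ≤ Σⱼ log_{|α|}(|qⱼ| + 1)` for all `i`. -/
theorem stmt_7 (k : ℕ) (q : Fin k → ℤ) (α : ℚ) (hα : 1 < |α|)
    (hsol : ∃ x : Fin k → ℤ, ∑ i, (q i : ℚ) * α ^ (x i) = 0) :
    ∃ x : Fin k → ℤ,
      (∑ i, (q i : ℚ) * α ^ (x i) = 0) ∧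
        ∀ i, 0 ≤ x i ∧
          (x i : ℝ) ≤ ∑ j, Real.logb |(α : ℝ)| (|(q j : ℝ)| + 1) := by
  have hα0 : α ≠ 0 := by rintro rfl; norm_num at hα
  obtain ⟨x, hx⟩ := hsol
  obtain ⟨y, hy⟩ := exists_nat_solution_of_int_solution hα0 x hx
  obtain ⟨z, hz, hbound⟩ := exists_solution_abs_pow_le_prod hα0 y hy
  refine ⟨fun i => z i, by simpa using hz, fun i => ⟨by positivity, ?_⟩⟩
  have hαR : 1 < |(α : ℝ)| := by exact_mod_cast hα
  have hboundR : |(α : ℝ)| ^ z i ≤ ∏ j, (|(q j : ℝ)| + 1) := by exact_mod_cast hbound i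
  exact_mod_cast natCast_le_sum_logb_of_pow_le_prod hαR univ (fun j _ => abs_nonneg _) hboundR
end

section
/- Let n be an integer and c₁ = (α₁, β₁), ..., c_k = (α_k, β_k) elements of BS(1,n) ≅ ℤ[1/n] ⋊ ℤ, with β = gcd(|β₁|, ..., |β_k|). The spherical equation z₁⁻¹c₁z₁ ⋯ z_k⁻¹c_kz_k = 1 has a solution in BS(1,n) if and only if (i) β₁ + ... + β_k = 0, and (ii) there exist integers x₁, ..., x_k with α₁n^{x₁} + ... + α_kn^{x_k} ≡ 0 (mod n^β − 1). -/
/-- Inversion in ℤ[1/n] ⋊ ℤ: `(v, y)⁻¹ = (-n^y v, -y)`. -/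
def bsInv (n : ℤ) (p : ℚ × ℤ) : ℚ × ℤ := (-(n : ℚ) ^ p.2 * p.1, -p.2)

/-- Membership of a rational number in the subring ℤ[1/n] of ℚ. -/
def inZinv (n : ℤ) (v : ℚ) : Prop := ∃ (m : ℤ) (e : ℕ), v * (n : ℚ) ^ e = m

open Finset Submodule

def zInvSubring (n : ℤ) : Subring ℚ where
  carrier := {v | inZinv n v}
  zero_mem' := ⟨0, 0, by simp⟩
  one_mem' := ⟨1, 0, by simp⟩
  add_mem' := by
    rintro a b ⟨A, e, hA⟩ ⟨B, f, hB⟩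
    refine ⟨A * n ^ f + B * n ^ e, e + f, ?_⟩
    push_cast
    linear_combination (n : ℚ) ^ f * hA + (n : ℚ) ^ e * hB
  mul_mem' := by
    rintro a b ⟨A, e, hA⟩ ⟨B, f, hB⟩
    refine ⟨A * B, e + f, ?_⟩
    push_cast
    linear_combination b * (n : ℚ) ^ f * hA + (A : ℚ) * hB
  neg_mem' := by
    rintro a ⟨A, e, hA⟩
    exact ⟨-A, e, by push_cast; linear_combination -hA⟩

theorem zpow_mem_zInvSubring {n : ℤ} (hn : n ≠ 0) (m : ℤ) : (n : ℚ) ^ m ∈ zInvSubring n := by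
  obtain ⟨m, rfl | rfl⟩ := m.eq_nat_or_neg
  · exact ⟨n ^ m, 0, by simp⟩
  · exact ⟨1, m, by simp [zpow_neg, hn]⟩

theorem mem_span_singleton_zInvSubring {n : ℤ} {v d : ℚ} :
    v ∈ span (zInvSubring n) {d} ↔ ∃ γ, inZinv n γ ∧ v = γ * d := by
  simp only [mem_span_singleton, Subring.smul_def, Subtype.exists, smul_eq_mul, eq_comm,
    exists_prop]
  rfl

def expSubgroup {n : ℤ} (hn : n ≠ 0) (J : Submodule (zInvSubring n) ℚ) : AddSubgroup ℤ where
  carrier := {m | (n : ℚ) ^ m - 1 ∈ J}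
  zero_mem' := by simp
  add_mem' := by
    intro a b ha hb
    have hn' : (n : ℚ) ≠ 0 := by exact_mod_cast hn
    have e : (n : ℚ) ^ (a + b) - 1 = ((n : ℚ) ^ a - 1) + (n : ℚ) ^ a * ((n : ℚ) ^ b - 1) := by
      rw [zpow_add₀ hn']; ring
    rw [Set.mem_ofPred_eq, e]
    exact J.add_mem ha (J.smul_mem ⟨_, zpow_mem_zInvSubring hn a⟩ hb)
  neg_mem' := by
    intro a ha
    have hn' : (n : ℚ) ≠ 0 := by exact_mod_cast hn
    have e : (n : ℚ) ^ (-a) - 1 = -(n : ℚ) ^ (-a) * ((n : ℚ) ^ a - 1) := by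
      rw [neg_mul, mul_sub, ← zpow_add₀ hn']; simp
    rw [Set.mem_ofPred_eq, e]
    exact J.smul_mem ⟨_, neg_mem (zpow_mem_zInvSubring hn (-a))⟩ ha

theorem mem_expSubgroup {n : ℤ} (hn : n ≠ 0) {J : Submodule (zInvSubring n) ℚ} {m : ℤ} :
    m ∈ expSubgroup hn J ↔ (n : ℚ) ^ m - 1 ∈ J :=
  Iff.rfl

theorem zpow_sub_one_mem_span_of_dvd {n : ℤ} (hn : n ≠ 0) {g : ℕ} {b : ℤ} (h : g ∣ b.natAbs) :
    (n : ℚ) ^ b - 1 ∈ span (zInvSubring n) {(n : ℚ) ^ (g : ℤ) - 1} := by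
  have hg : (g : ℤ) ∈ expSubgroup hn (span _ {(n : ℚ) ^ (g : ℤ) - 1}) := subset_span rfl
  exact AddSubgroup.zmultiples_le_of_mem hg (Int.mem_zmultiples_iff.2 (Int.natCast_dvd.2 h))

theorem Int.natCast_finsetGcd_natAbs {ι : Type*} (s : Finset ι) (f : ι → ℤ) :
    ((s.gcd fun i => (f i).natAbs : ℕ) : ℤ) = s.gcd f := by
  classical
  induction s using Finset.induction_on with
  | empty => simp
  | insert a s _ ih => simp [gcd_insert, ← ih, ← Int.coe_gcd, Int.gcd, gcd_eq_nat_gcd]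

theorem zpow_gcd_sub_one_mem_span {n : ℤ} (hn : n ≠ 0) {ι : Type*} [Fintype ι] (b : ι → ℤ) :
    (n : ℚ) ^ ((univ.gcd fun i => (b i).natAbs : ℕ) : ℤ) - 1 ∈
      span (zInvSubring n) (Set.range fun i => (n : ℚ) ^ b i - 1) := by
  obtain ⟨c, hc⟩ := univ.gcd_eq_sum_mul b
  have hb (i) : b i ∈ expSubgroup hn (span _ (Set.range fun i => (n : ℚ) ^ b i - 1)) :=
    subset_span ⟨i, rfl⟩
  rw [← mem_expSubgroup hn, Int.natCast_finsetGcd_natAbs, hc]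
  exact sum_mem fun i _ => by simpa [mul_comm] using zsmul_mem (hb i) (c i)

theorem bsMul_bsInv_mul_bsMul (n : ℤ) (z : ℚ × ℤ) (a : ℚ) (b : ℤ) :
    bsMul n (bsMul n (bsInv n z) (a, b)) z =
      ((n : ℚ) ^ z.2 * (a - z.1) + (n : ℚ) ^ (z.2 - b) * z.1, b) := by
  simp only [bsMul, bsInv, neg_neg, neg_add, ← sub_eq_add_neg, Prod.mk.injEq]
  constructor <;> ring

theorem foldr_bsMul_snd (n : ℤ) (l : List (ℚ × ℤ)) :
    (l.foldr (bsMul n) (0, 0)).2 = (l.map Prod.snd).sum := by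
  induction l with
  | nil => rfl
  | cons p l ih => simp [bsMul, ih]

theorem foldr_bsMul_fst_eq_zero (n : ℤ) (l : List (ℚ × ℤ)) (h : ∀ p ∈ l, p.1 = 0) :
    (l.foldr (bsMul n) (0, 0)).1 = 0 := by
  induction l with
  | nil => rfl
  | cons p l ih => simp [bsMul, h p (by simp), ih fun q hq => h q (by simp [hq])]

theorem foldr_bsMul_ofFn {n : ℤ} (hn : n ≠ 0) {k : ℕ} (c : Fin k → ℚ × ℤ) :
    (List.ofFn c).foldr (bsMul n) (0, 0) =
      (∑ i, (n : ℚ) ^ (-Fin.partialSum (fun j => (c j).2) i.castSucc) * (c i).1,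
        ∑ i, (c i).2) := by
  induction k with
  | zero => simp
  | succ k ih =>
    have hn' : (n : ℚ) ≠ 0 := by exact_mod_cast hn
    rw [List.ofFn_succ, List.foldr_cons, ih, Fin.sum_univ_succ, Fin.sum_univ_succ]
    simp only [bsMul, Fin.castSucc_zero, Fin.partialSum_zero, neg_zero, zpow_zero, one_mul,
      ← Fin.succ_castSucc, Fin.partialSum_succ', neg_add, zpow_add₀ hn', mul_sum, mul_assoc]
    rfl

def sphericalProd (n : ℤ) {k : ℕ} (α : Fin k → ℚ) (β : Fin k → ℤ) (z : Fin k → ℚ × ℤ) :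
    ℚ × ℤ :=
  (List.ofFn fun i => bsMul n (bsMul n (bsInv n (z i)) (α i, β i)) (z i)).foldr (bsMul n) (0, 0)

theorem sphericalProd_snd (n : ℤ) {k : ℕ} (α : Fin k → ℚ) (β : Fin k → ℤ)
    (z : Fin k → ℚ × ℤ) : (sphericalProd n α β z).2 = ∑ i, β i := by
  simp [sphericalProd, foldr_bsMul_snd, List.map_ofFn, List.sum_ofFn, bsMul_bsInv_mul_bsMul]

theorem sphericalProd_fst {n : ℤ} (hn : n ≠ 0) {k : ℕ} (α : Fin k → ℚ) (β : Fin k → ℤ)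
    (z : Fin k → ℚ × ℤ) :
    (sphericalProd n α β z).1 =
      ∑ i, (α i * (n : ℚ) ^ ((z i).2 - Fin.partialSum β i.castSucc) -
        (n : ℚ) ^ ((z i).2 - Fin.partialSum β i.castSucc - β i) * (z i).1 *
          ((n : ℚ) ^ β i - 1)) := by
  have hn' : (n : ℚ) ≠ 0 := by exact_mod_cast hn
  simp only [sphericalProd, foldr_bsMul_ofFn hn, bsMul_bsInv_mul_bsMul]
  refine sum_congr rfl fun i _ => ?_
  simp only [zpow_sub₀ hn', zpow_neg]
  field_simp
  ring

theorem exists_congruence_of_sphericalProd_fst_eq_zero {n : ℤ} (hn : n ≠ 0) {k : ℕ}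
    {α : Fin k → ℚ} {β : Fin k → ℤ} {z : Fin k → ℚ × ℤ} (hz : ∀ i, inZinv n (z i).1)
    (h : (sphericalProd n α β z).1 = 0) :
    ∃ x : Fin k → ℤ, ∃ γ : ℚ, inZinv n γ ∧ ∑ i, α i * (n : ℚ) ^ x i =
      γ * ((n : ℚ) ^ ((univ.gcd fun i => (β i).natAbs : ℕ) : ℤ) - 1) := by
  rw [sphericalProd_fst hn, sum_sub_distrib, sub_eq_zero] at h
  refine ⟨fun i => (z i).2 - Fin.partialSum β i.castSucc, mem_span_singleton_zInvSubring.1 ?_⟩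
  rw [h]
  exact sum_mem fun i _ => smul_mem _
    (⟨_, mul_mem (zpow_mem_zInvSubring hn _) (hz i)⟩ : zInvSubring n)
    (zpow_sub_one_mem_span_of_dvd hn (gcd_dvd (mem_univ i)))

theorem exists_sphericalProd_fst_eq_zero {n : ℤ} (hn : n ≠ 0) {k : ℕ} {α : Fin k → ℚ}
    {β : Fin k → ℤ} {x : Fin k → ℤ} {γ : ℚ} (hγ : inZinv n γ)
    (hx : ∑ i, α i * (n : ℚ) ^ x i =
      γ * ((n : ℚ) ^ ((univ.gcd fun i => (β i).natAbs : ℕ) : ℤ) - 1)) :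
    ∃ z : Fin k → ℚ × ℤ, (∀ i, inZinv n (z i).1) ∧ (sphericalProd n α β z).1 = 0 := by
  have hn' : (n : ℚ) ≠ 0 := by exact_mod_cast hn
  obtain ⟨w, hw⟩ := (mem_span_range_iff_exists_fun _).1 (zpow_gcd_sub_one_mem_span hn β)
  refine ⟨fun i => ((n : ℚ) ^ (β i - x i) * (γ * w i), x i + Fin.partialSum β i.castSucc),
    fun i => mul_mem (zpow_mem_zInvSubring hn _) (mul_mem hγ (w i).2), ?_⟩
  simp only [sphericalProd_fst hn, add_sub_cancel_right, ← mul_assoc, ← zpow_add₀ hn',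
    sub_add_sub_cancel, sub_self, zpow_zero, one_mul]
  simp only [sum_sub_distrib, hx, ← hw, mul_sum, Subring.smul_def, smul_eq_mul, mul_assoc,
    sub_self]

theorem stmt_8_general (n : ℤ) (k : ℕ) (α : Fin k → ℚ) (β : Fin k → ℤ) :
    (∃ z : Fin k → ℚ × ℤ, (∀ i, inZinv n (z i).1) ∧
        (List.ofFn fun i =>
            bsMul n (bsMul n (bsInv n (z i)) (α i, β i)) (z i)).foldr
          (bsMul n) (0, 0) = (0, 0)) ↔
      (∑ i, β i = 0) ∧
        ∃ x : Fin k → ℤ, ∃ γ : ℚ, inZinv n γ ∧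
          ∑ i, α i * (n : ℚ) ^ (x i) =
            γ * ((n : ℚ) ^ (Finset.univ.gcd fun i => (β i).natAbs) - 1) := by
  show (∃ z, (∀ i, inZinv n (z i).1) ∧ sphericalProd n α β z = (0, 0)) ↔ _
  simp only [Prod.ext_iff, sphericalProd_snd]
  rcases eq_or_ne n 0 with rfl | hn
  · -- For `n = 0` the congruence holds with all `xᵢ = 1`, and `zᵢ = (0, 1)` turns every
    -- factor into `(0, βᵢ)`.
    constructor
    · rintro ⟨z, -, -, hβ⟩
      exact ⟨hβ, fun _ => 1, 0, (zInvSubring 0).zero_mem, by simp⟩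
    · rintro ⟨hβ, -⟩
      exact ⟨fun _ => (0, 1), fun _ => (zInvSubring 0).zero_mem,
        foldr_bsMul_fst_eq_zero _ _ (by simp [bsMul_bsInv_mul_bsMul]), hβ⟩
  rw [← zpow_natCast]
  constructor
  · rintro ⟨z, hz, hfst, hβ⟩
    exact ⟨hβ, exists_congruence_of_sphericalProd_fst_eq_zero hn hz hfst⟩
  · rintro ⟨hβ, x, γ, hγ, hx⟩
    obtain ⟨z, hz, hfst⟩ := exists_sphericalProd_fst_eq_zero hn hγ hx
    exact ⟨z, hz, hfst, hβ⟩

/-- The spherical equation `z₁⁻¹c₁z₁ ⋯ z_k⁻¹c_kz_k = 1` over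
BS(1,n) ≅ ℤ[1/n] ⋊ ℤ, with `cᵢ = (αᵢ, βᵢ)` and `β = gcd(|β₁|,…,|β_k|)`,
has a solution iff `Σβᵢ = 0` and there exist integers `x₁,…,x_k` with
`α₁n^{x₁} + ⋯ + α_kn^{x_k} ≡ 0 (mod n^β - 1)` in ℤ[1/n]. -/
theorem stmt_8 (n : ℤ) (k : ℕ) (α : Fin k → ℚ) (β : Fin k → ℤ)
    (hα : ∀ i, inZinv n (α i)) :
    (∃ z : Fin k → ℚ × ℤ, (∀ i, inZinv n (z i).1) ∧
        (List.ofFn fun i =>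
            bsMul n (bsMul n (bsInv n (z i)) (α i, β i)) (z i)).foldr
          (bsMul n) (0, 0) = (0, 0)) ↔
      (∑ i, β i = 0) ∧
        ∃ x : Fin k → ℤ, ∃ γ : ℚ, inZinv n γ ∧
          ∑ i, α i * (n : ℚ) ^ (x i) =
            γ * ((n : ℚ) ^ (Finset.univ.gcd fun i => (β i).natAbs) - 1) :=
  stmt_8_general n k α β
end

section
/- Let n be an integer and c₁, ..., c_k ∈ BS(1,n). The orientable equation of genus g ≥ 1, ∏_{j=1}^g [x_j, y_j] ∏_{i=1}^k z_i⁻¹ c_i z_i = 1, has a solution in BS(1,n) if and only if σ_t(c₁⋯c_k) = 0 and (n−1) divides σ_a(c₁⋯c_k). -/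
/-- The `a`-exponent sum of a word on `{a, t}`. -/
def sigmaA (w : FreeGroup Bool) : ℤ :=
  Multiplicative.toAdd
    (FreeGroup.lift (fun b => Multiplicative.ofAdd (if b then (0 : ℤ) else 1)) w)

/-- The `t`-exponent sum of a word on `{a, t}`. -/
def sigmaT (w : FreeGroup Bool) : ℤ :=
  Multiplicative.toAdd
    (FreeGroup.lift (fun b => Multiplicative.ofAdd (if b then (1 : ℤ) else 0)) w)

/-!
Any homomorphism to an abelian group kills commutators and sends conjugates of `cᵢ` to the
image of `cᵢ`, so a solution forces `c₁⋯c_k` into the kernel of `σ_t` and of `σ_a mod (n-1)`.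
Conversely, every element of `BS(1,n)` has the form `t^p a^m t^{-q}`; in that kernel `p = q` and
`m = (n-1)u`, and since `a^{(n-1)u} = a^{-u} t⁻¹ a^u t` such an element is a single commutator.
Genus `g ≥ 1` leaves room for that commutator, with all `zᵢ = 1`.
-/

open scoped commutatorElement

section OrientableEquation

variable {G : Type*} [Group G]

def OrientableSolvable (g : ℕ) {k : ℕ} (c : Fin k → G) : Prop :=
  ∃ (x y : Fin g → G) (z : Fin k → G),
    (List.ofFn fun j => (x j)⁻¹ * (y j)⁻¹ * x j * y j).prod *
      (List.ofFn fun i => (z i)⁻¹ * c i * z i).prod = 1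

theorem OrientableSolvable.map_prod_eq_one {M : Type*} [CommGroup M] {g k : ℕ}
    {c : Fin k → G} (h : OrientableSolvable g c) (F : G →* M) :
    F (List.ofFn c).prod = 1 := by
  obtain ⟨x, y, z, h⟩ := h
  simpa [map_list_prod, List.map_ofFn, Function.comp_def, mul_comm] using congrArg F h

theorem orientableSolvable_of_prod_eq_commutatorElement {g k : ℕ} (hg : 1 ≤ g)
    {c : Fin k → G} {u v : G} (h : (List.ofFn c).prod = ⁅u, v⁆) :
    OrientableSolvable g c := by
  obtain ⟨g, rfl⟩ := Nat.exists_eq_add_of_le' hg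
  -- Mathlib's `⁅u, v⁆ = u v u⁻¹ v⁻¹` is the inverse of `[v⁻¹, u⁻¹]` in the convention `x⁻¹y⁻¹xy`
  refine ⟨Fin.cons v⁻¹ 1, Fin.cons u⁻¹ 1, 1, ?_⟩
  simp [List.ofFn_succ, h, commutatorElement_def, mul_assoc]

end OrientableEquation

namespace BaumslagSolitar

variable {n : ℤ}

variable (n) in
def a : BS n := PresentedGroup.of false

variable (n) in
def t : BS n := PresentedGroup.of true

theorem t_inv_mul_a_mul_t : (t n)⁻¹ * a n * t n = a n ^ n := by
  have h := PresentedGroup.one_of_mem (rels := BSrels n) rfl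
  simp only [map_mul, map_inv, map_zpow] at h
  exact mul_inv_eq_one.mp h

theorem a_zpow_mul_t (m : ℤ) : a n ^ m * t n = t n * a n ^ (m * n) := by
  have h := conj_zpow (a := (t n)⁻¹) (b := a n) (i := m)
  rw [inv_inv] at h
  rw [mul_comm m, zpow_mul, ← t_inv_mul_a_mul_t, h]
  group

theorem a_zpow_mul_t_pow (m : ℤ) (r : ℕ) : a n ^ m * t n ^ r = t n ^ r * a n ^ (m * n ^ r) := by
  induction r generalizing m with
  | zero => simp
  | succ r ih =>
    rw [pow_succ, ← mul_assoc, ih, mul_assoc, a_zpow_mul_t, ← mul_assoc, pow_succ, mul_assoc m]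

theorem normalForm_mul_normalForm_of_le {p q p' q' : ℕ} (m m' : ℤ) (h : q ≤ p') :
    t n ^ p * a n ^ m * (t n ^ q)⁻¹ * (t n ^ p' * a n ^ m' * (t n ^ q')⁻¹) =
      t n ^ (p + (p' - q)) * a n ^ (m * n ^ (p' - q) + m') * (t n ^ q')⁻¹ := by
  obtain ⟨r, rfl⟩ := Nat.exists_eq_add_of_le h
  rw [Nat.add_sub_cancel_left]
  calc t n ^ p * a n ^ m * (t n ^ q)⁻¹ * (t n ^ (q + r) * a n ^ m' * (t n ^ q')⁻¹)
      = t n ^ p * (a n ^ m * t n ^ r) * a n ^ m' * (t n ^ q')⁻¹ := by rw [pow_add]; group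
    _ = t n ^ (p + r) * a n ^ (m * n ^ r + m') * (t n ^ q')⁻¹ := by
      rw [a_zpow_mul_t_pow, pow_add, zpow_add]; group

variable (n) in
def normalForms : Subgroup (BS n) where
  carrier := {x | ∃ (p q : ℕ) (m : ℤ), x = t n ^ p * a n ^ m * (t n ^ q)⁻¹}
  one_mem' := ⟨0, 0, 0, by simp⟩
  inv_mem' := by
    rintro _ ⟨p, q, m, rfl⟩
    exact ⟨q, p, -m, by group⟩
  mul_mem' := by
    rintro _ _ ⟨p, q, m, rfl⟩ ⟨p', q', m', rfl⟩
    rcases le_total q p' with h | h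
    · exact ⟨_, _, _, normalForm_mul_normalForm_of_le m m' h⟩
    · -- the case `p' ≤ q` is the previous one for the product of the inverses, in reverse order
      have key := normalForm_mul_normalForm_of_le (n := n) (p := q') (q' := p) (-m') (-m) h
      refine ⟨p, q' + (q - p'), -(-m' * n ^ (q - p') + -m), ?_⟩
      calc t n ^ p * a n ^ m * (t n ^ q)⁻¹ * (t n ^ p' * a n ^ m' * (t n ^ q')⁻¹)
          = (t n ^ q' * a n ^ (-m') * (t n ^ p')⁻¹ * (t n ^ q * a n ^ (-m) * (t n ^ p)⁻¹))⁻¹ := by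
            group
        _ = _ := by rw [key]; group

theorem exists_eq_normalForm (x : BS n) :
    ∃ (p q : ℕ) (m : ℤ), x = t n ^ p * a n ^ m * (t n ^ q)⁻¹ := by
  refine PresentedGroup.generated_by _ (normalForms n) (fun j => ?_) x
  cases j
  · exact ⟨0, 0, 1, by simp [a]⟩
  · exact ⟨1, 0, 0, by simp [t]⟩

variable (n) in
def sigmaTHom : BS n →* Multiplicative ℤ :=
  PresentedGroup.toGroup (f := fun b => Multiplicative.ofAdd (if b then (1 : ℤ) else 0)) <| by
    rintro r rfl
    simp

variable (n) in
def sigmaAModHom : BS n →* Multiplicative (ℤ ⧸ AddSubgroup.zmultiples (n - 1)) :=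
  PresentedGroup.toGroup (f := fun b => Multiplicative.ofAdd
      ((if b then 0 else 1 : ℤ) : ℤ ⧸ AddSubgroup.zmultiples (n - 1))) <| by
    rintro r rfl
    simp only [map_mul, map_inv, FreeGroup.lift_apply_of, ↓reduceIte, QuotientAddGroup.mk_zero,
      ofAdd_zero, inv_one, Bool.false_eq_true, one_mul, mul_one, map_zpow]
    rw [mul_inv_eq_one, ← ofAdd_zsmul, ← QuotientAddGroup.mk_zsmul, EmbeddingLike.apply_eq_iff_eq,
      QuotientAddGroup.eq, Int.mem_zmultiples_iff]
    exact ⟨1, by simp; ring⟩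

theorem sigmaTHom_mk_eq_one_iff (v : FreeGroup Bool) :
    sigmaTHom n (PresentedGroup.mk _ v) = 1 ↔ sigmaT v = 0 :=
  show Multiplicative.ofAdd (sigmaT v) = 1 ↔ _ from ofAdd_eq_one

theorem sigmaAModHom_mk_eq_one_iff (v : FreeGroup Bool) :
    sigmaAModHom n (PresentedGroup.mk _ v) = 1 ↔ (n - 1) ∣ sigmaA v := by
  have : sigmaAModHom n (PresentedGroup.mk _ v) =
      Multiplicative.ofAdd (sigmaA v : ℤ ⧸ AddSubgroup.zmultiples (n - 1)) := by
    induction v using FreeGroup.induction_on with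
    | C1 => rfl
    | of b => cases b <;> rfl
    | inv_of b _ => cases b <;> rfl
    | mul x y hx hy =>
      simp only [map_mul, hx, hy, sigmaA, toAdd_mul, QuotientAddGroup.mk_add, ofAdd_add]
  rw [this, ofAdd_eq_one, QuotientAddGroup.eq_zero_iff, Int.mem_zmultiples_iff]

theorem a_zpow_mul_eq_commutatorElement (u : ℤ) :
    a n ^ ((n - 1) * u) = ⁅a n ^ (-u), (t n)⁻¹⁆ := by
  calc a n ^ ((n - 1) * u) = a n ^ (-u) * a n ^ (u * n) := by rw [← zpow_add]; ring_nf
    _ = a n ^ (-u) * ((t n)⁻¹ * (a n ^ u * t n)) := by rw [a_zpow_mul_t, inv_mul_cancel_left]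
    _ = ⁅a n ^ (-u), (t n)⁻¹⁆ := by rw [commutatorElement_def]; group

theorem exists_eq_commutatorElement {x : BS n} (hT : sigmaTHom n x = 1)
    (hA : sigmaAModHom n x = 1) : ∃ y z : BS n, x = ⁅y, z⁆ := by
  obtain ⟨p, q, m, rfl⟩ := exists_eq_normalForm x
  have ht : sigmaTHom n (t n) = Multiplicative.ofAdd 1 := PresentedGroup.toGroup.of _
  have ha : sigmaTHom n (a n) = 1 := PresentedGroup.toGroup.of _
  obtain rfl : p = q := by simpa [ht, ha, ← ofAdd_nsmul, mul_inv_eq_one] using hT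
  have ht' : sigmaAModHom n (t n) = 1 := PresentedGroup.toGroup.of _
  have ha' : sigmaAModHom n (a n) = Multiplicative.ofAdd ↑(1 : ℤ) := PresentedGroup.toGroup.of _
  obtain ⟨u, rfl⟩ : n - 1 ∣ m := by
    simpa [ht', ha', ← ofAdd_zsmul, ← QuotientAddGroup.mk_zsmul, Int.mem_zmultiples_iff] using hA
  refine ⟨MulAut.conj (t n ^ p) (a n ^ (-u)), MulAut.conj (t n ^ p) (t n)⁻¹, ?_⟩
  rw [← map_commutatorElement, ← a_zpow_mul_eq_commutatorElement]
  rfl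

end BaumslagSolitar

open BaumslagSolitar

/-- The orientable equation of genus `g ≥ 1` with constants `c i` (given by words
`w i` on `{a,t}`), namely `∏_j [x_j,y_j] ∏_i z_i⁻¹ c_i z_i = 1` (with
`[x,y] = x⁻¹y⁻¹xy`), has a solution in BS(1,n) iff `σ_t(c₁⋯c_k) = 0` and
`(n-1) ∣ σ_a(c₁⋯c_k)`. -/
theorem stmt_9 (n : ℤ) (g k : ℕ) (hg : 1 ≤ g) (w : Fin k → FreeGroup Bool)
    (c : Fin k → BS n) (hc : ∀ i, c i = PresentedGroup.mk (BSrels n) (w i)) :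
    (∃ (x y : Fin g → BS n) (z : Fin k → BS n),
        (List.ofFn fun j => (x j)⁻¹ * (y j)⁻¹ * x j * y j).prod *
          (List.ofFn fun i => (z i)⁻¹ * c i * z i).prod = 1) ↔
      sigmaT (List.ofFn w).prod = 0 ∧ (n - 1) ∣ sigmaA (List.ofFn w).prod := by
  have hprod : PresentedGroup.mk (BSrels n) (List.ofFn w).prod = (List.ofFn c).prod := by
    rw [map_list_prod, List.map_ofFn, funext hc, Function.comp_def]
  change OrientableSolvable g c ↔ _
  rw [← sigmaTHom_mk_eq_one_iff, ← sigmaAModHom_mk_eq_one_iff, hprod]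
  constructor
  · intro h
    exact ⟨h.map_prod_eq_one _, h.map_prod_eq_one _⟩
  · rintro ⟨hT, hA⟩
    obtain ⟨u, v, huv⟩ := exists_eq_commutatorElement hT hA
    exact orientableSolvable_of_prod_eq_commutatorElement hg huv
end

section
/- For every integer n, an element w of BS(1,n) lies in the subgroup generated by all squares if and only if gcd(2, n−1) divides σ_a(w) and 2 divides σ_t(w). -/
/-!
The verbal subgroup `H` of squares is normal, and `BS(1,n) ⧸ H` is a group of exponent two,
hence abelian. There the relation `t⁻¹ a t = aⁿ` becomes `a^(n-1) = 1`, so together with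
`a² = 1` the image of `a` has order dividing `gcd(2, n-1)`, while the image of `t` has order
dividing `2`. Hence the image of `w` is `a^σ_a(w) t^σ_t(w)`, trivial under the divisibility
conditions. Conversely, `a ↦ (1, 0)`, `t ↦ (0, 1)` defines a homomorphism
`BS(1,n) → ℤ/gcd(2,n-1) × ℤ/2` into a group of exponent two, so it kills `H`, and it sends
`w` to `(σ_a(w), σ_t(w))`.
-/

section Squares

variable {G : Type*} [Group G]

variable (G) in
def squaresSubgroup : Subgroup G :=
  Subgroup.closure {s : G | ∃ x : G, s = x ^ 2}

theorem sq_mem_squaresSubgroup (x : G) : x ^ 2 ∈ squaresSubgroup G :=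
  Subgroup.subset_closure ⟨x, rfl⟩

instance squaresSubgroup_normal : (squaresSubgroup G).Normal where
  conj_mem _ h g := by
    have : squaresSubgroup G ≤ (squaresSubgroup G).comap (MulAut.conj g).toMonoidHom :=
      Subgroup.closure_le _ |>.2 fun _ ⟨x, hx⟩ => by
        simpa [hx, conj_pow] using sq_mem_squaresSubgroup (g * x * g⁻¹)
    exact this h

theorem squaresSubgroup_le_ker {K : Type*} [Group K] (f : G →* K) (hf : ∀ y : K, y ^ 2 = 1) :
    squaresSubgroup G ≤ f.ker :=
  Subgroup.closure_le _ |>.2 fun _ ⟨x, hx⟩ => by simp [hx, hf]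

theorem sq_eq_one_of_quotient_squaresSubgroup (q : G ⧸ squaresSubgroup G) : q ^ 2 = 1 := by
  induction q using QuotientGroup.induction_on with
  | H x => rw [← QuotientGroup.mk_pow, QuotientGroup.eq_one_iff]; exact sq_mem_squaresSubgroup x

instance : CommGroup (G ⧸ squaresSubgroup G) where
  mul_comm a b := (Commute.of_orderOf_dvd_two (fun q =>
    orderOf_dvd_of_pow_eq_one (sq_eq_one_of_quotient_squaresSubgroup q)) a b).eq

end Squares

@[simp] theorem sigmaA_mul (u v : FreeGroup Bool) : sigmaA (u * v) = sigmaA u + sigmaA v := by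
  simp [sigmaA]
@[simp] theorem sigmaA_inv (u : FreeGroup Bool) : sigmaA u⁻¹ = -sigmaA u := by simp [sigmaA]
@[simp] theorem sigmaA_one : sigmaA 1 = 0 := by simp [sigmaA]
@[simp] theorem sigmaA_of (b : Bool) : sigmaA (.of b) = if b then 0 else 1 := by simp [sigmaA]
@[simp] theorem sigmaT_mul (u v : FreeGroup Bool) : sigmaT (u * v) = sigmaT u + sigmaT v := by
  simp [sigmaT]
@[simp] theorem sigmaT_inv (u : FreeGroup Bool) : sigmaT u⁻¹ = -sigmaT u := by simp [sigmaT]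
@[simp] theorem sigmaT_one : sigmaT 1 = 0 := by simp [sigmaT]
@[simp] theorem sigmaT_of (b : Bool) : sigmaT (.of b) = if b then 1 else 0 := by simp [sigmaT]

theorem map_eq_zpow_sigmaA_mul_zpow_sigmaT {G : Type*} [CommGroup G]
    (f : FreeGroup Bool →* G) (w : FreeGroup Bool) :
    f w = f (.of false) ^ sigmaA w * f (.of true) ^ sigmaT w := by
  induction w using FreeGroup.induction_on with
  | C1 => simp
  | of b => cases b <;> simp
  | inv_of b => cases b <;> simp
  | mul x y hx hy => rw [map_mul, hx, hy, sigmaA_mul, sigmaT_mul, zpow_add, zpow_add,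
      mul_mul_mul_comm]

namespace BS

variable {n : ℤ}

theorem map_of_false_zpow_sub_one_eq_one {Q : Type*} [CommGroup Q] (f : FreeGroup Bool →* Q)
    (hf : ∀ r ∈ BSrels n, f r = 1) : f (.of false) ^ (n - 1) = 1 := by
  have hrel := hf _ rfl
  simp only [map_mul, map_inv, map_zpow, mul_comm _ (f (.of false)), inv_mul_cancel_right,
    mul_inv_eq_one] at hrel
  rw [zpow_sub_one, ← hrel, mul_inv_cancel]

theorem two_eq_zero_zmod_gcd : (2 : ZMod (Int.gcd 2 (n - 1))) = 0 := by
  exact_mod_cast (ZMod.intCast_zmod_eq_zero_iff_dvd 2 _).2 (Int.gcd_dvd_left 2 (n - 1))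

theorem intCast_eq_one_zmod_gcd : ((n : ℤ) : ZMod (Int.gcd 2 (n - 1))) = 1 := by
  simpa [sub_eq_zero] using
    (ZMod.intCast_zmod_eq_zero_iff_dvd _ _).2 (Int.gcd_dvd_right 2 (n - 1))

def parity (n : ℤ) : BS n →* Multiplicative (ZMod (Int.gcd 2 (n - 1)) × ZMod 2) :=
  PresentedGroup.toGroup (f := fun b => .ofAdd (if b then (0, 1) else (1, 0))) <| by
    rintro r rfl
    apply Multiplicative.toAdd.injective
    simp [intCast_eq_one_zmod_gcd]

theorem parity_mk (w : FreeGroup Bool) :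
    parity n (PresentedGroup.mk _ w) = .ofAdd ((sigmaA w : ZMod _), (sigmaT w : ZMod 2)) := by
  rw [← MonoidHom.comp_apply, map_eq_zpow_sigmaA_mul_zpow_sigmaT]
  change parity n (.of false) ^ _ * parity n (.of true) ^ _ = _
  apply Multiplicative.toAdd.injective
  simp [parity]

theorem parity_mk_eq_one_iff (w : FreeGroup Bool) :
    parity n (PresentedGroup.mk _ w) = 1 ↔
      (Int.gcd 2 (n - 1) : ℤ) ∣ sigmaA w ∧ 2 ∣ sigmaT w := by
  rw [parity_mk, ofAdd_eq_one, Prod.mk_eq_zero, ZMod.intCast_zmod_eq_zero_iff_dvd,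
    ZMod.intCast_zmod_eq_zero_iff_dvd, Nat.cast_ofNat]

theorem squaresSubgroup_le_ker_parity : squaresSubgroup (BS n) ≤ (parity n).ker :=
  squaresSubgroup_le_ker _ fun y => by
    apply Multiplicative.toAdd.injective
    ext
    · simp [two_eq_zero_zmod_gcd]
    · simp [show (2 : ZMod 2) = 0 from rfl]

theorem mk_mem_squaresSubgroup_of_dvd {w : FreeGroup Bool}
    (ha : (Int.gcd 2 (n - 1) : ℤ) ∣ sigmaA w) (ht : 2 ∣ sigmaT w) :
    PresentedGroup.mk _ w ∈ squaresSubgroup (BS n) := by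
  let π := (QuotientGroup.mk' (squaresSubgroup (BS n))).comp (PresentedGroup.mk (BSrels n))
  have hπ : ∀ r ∈ BSrels n, π r = 1 := fun r hr => by
    simp [π, PresentedGroup.one_of_mem hr]
  have hsq (x : FreeGroup Bool) : π x ^ (2 : ℤ) = 1 := sq_eq_one_of_quotient_squaresSubgroup _
  have ha1 : π (.of false) ^ (Int.gcd 2 (n - 1) : ℤ) = 1 := by
    rw [zpow_natCast, pow_intGCD_eq_one]
    exact ⟨hsq _, map_of_false_zpow_sub_one_eq_one π hπ⟩
  obtain ⟨k, hk⟩ := ha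
  obtain ⟨m, hm⟩ := ht
  rw [← QuotientGroup.eq_one_iff]
  change π w = 1
  rw [map_eq_zpow_sigmaA_mul_zpow_sigmaT, hk, hm, zpow_mul, zpow_mul, ha1, hsq, one_zpow,
    one_zpow, one_mul]

end BS

/-- An element of BS(1,n), represented by a word `w` on `{a,t}`, lies in the
subgroup generated by all squares iff `gcd(2, n-1) ∣ σ_a(w)` and `2 ∣ σ_t(w)`. -/
theorem stmt_11 (n : ℤ) (w : FreeGroup Bool) :
    PresentedGroup.mk (BSrels n) w ∈
        Subgroup.closure {s : BS n | ∃ x : BS n, s = x ^ 2} ↔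
      (Int.gcd 2 (n - 1) : ℤ) ∣ sigmaA w ∧ 2 ∣ sigmaT w :=
  ⟨fun hw => (BS.parity_mk_eq_one_iff w).1 (BS.squaresSubgroup_le_ker_parity hw),
    fun ⟨ha, ht⟩ => BS.mk_mem_squaresSubgroup_of_dvd ha ht⟩
end

section
/- Let S = {s₁, ..., s_k} be a multiset of positive integers. Then S can be partitioned into two submultisets with equal sums if and only if the equation z₁⁻¹ a^{s₁} z₁ ⋯ z_k⁻¹ a^{s_k} z_k = 1 has a solution in BS(1,−1) = ⟨a, t | t⁻¹ a t = a⁻¹⟩. -/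
/-- The generator `a` of BS(1,n). -/
def bsA (n : ℤ) : BS n := PresentedGroup.of false

/-! The map `a ↦ r 1`, `t ↦ sr 0` sends BS(1,-1) onto the infinite dihedral group
`DihedralGroup 0`, in which every conjugate of the rotation `r m` is `r m` or `r (-m)`. A solution
`z` therefore yields signs `εᵢ` with `∑ εᵢ sᵢ = 0`, i.e. a partition with equal sums. Conversely,
given such a partition, conjugating `a ^ sᵢ` by `t` for the indices of one part turns the product
into `a ^ (∑ εᵢ sᵢ) = 1`. -/

open DihedralGroup

theorem Finset.sum_eq_sum_compl_iff_sum_ite_neg {ι M : Type*} [Fintype ι] [DecidableEq ι]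
    [AddCommGroup M] (T : Finset ι) (s : ι → M) :
    ∑ i ∈ T, s i = ∑ i ∈ Tᶜ, s i ↔ ∑ i, (if i ∈ T then s i else -s i) = 0 := by
  rw [Finset.sum_ite, ← Finset.compl_filter, Finset.filter_univ_mem, Finset.sum_neg_distrib,
    ← sub_eq_add_neg, sub_eq_zero]

theorem List.prod_ofFn_zpow {G : Type*} [Group G] (g : G) :
    ∀ {k : ℕ} (e : Fin k → ℤ), (List.ofFn fun i => g ^ e i).prod = g ^ ∑ i, e i
  | 0, _ => by simp
  | _ + 1, e => by
    rw [List.ofFn_succ, List.prod_cons, List.prod_ofFn_zpow g, Fin.sum_univ_succ, zpow_add]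

namespace DihedralGroup

variable {n : ℕ}

theorem inv_mul_r_mul_eq_or (g : DihedralGroup n) (i : ZMod n) :
    g⁻¹ * r i * g = r i ∨ g⁻¹ * r i * g = r (-i) := by
  cases g <;> simp [r_mul_r, sr_mul_r, sr_mul_sr]

theorem prod_ofFn_r {k : ℕ} (f : Fin k → ZMod n) :
    (List.ofFn fun i => r (f i)).prod = r (∑ i, f i) := by
  induction k with
  | zero => rfl
  | succ k ih => rw [List.ofFn_succ, List.prod_cons, ih, r_mul_r, Fin.sum_univ_succ]

theorem exists_prod_ofFn_inv_mul_r_mul {k : ℕ} (g : Fin k → DihedralGroup n) (s : Fin k → ZMod n) :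
    ∃ T : Finset (Fin k), (List.ofFn fun i => (g i)⁻¹ * r (s i) * g i).prod =
      r (∑ i, if i ∈ T then s i else -s i) := by
  classical
  refine ⟨Finset.univ.filter fun i => (g i)⁻¹ * r (s i) * g i = r (s i), ?_⟩
  rw [← prod_ofFn_r]
  congr
  funext i
  split_ifs with h
  · exact (Finset.mem_filter.1 h).2
  · exact (inv_mul_r_mul_eq_or _ _).resolve_left (by simpa using h)

end DihedralGroup

def bsT (n : ℤ) : BS n := PresentedGroup.of true

theorem inv_bsT_mul_bsA_mul_bsT (n : ℤ) : (bsT n)⁻¹ * bsA n * bsT n = bsA n ^ n :=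
  mul_inv_eq_one.mp (PresentedGroup.one_of_mem rfl)

theorem inv_bsT_mul_bsA_zpow_mul_bsT (n m : ℤ) :
    (bsT n)⁻¹ * bsA n ^ m * bsT n = bsA n ^ (n * m) := by
  rw [zpow_mul, ← inv_bsT_mul_bsA_mul_bsT]
  simpa using (conj_zpow (a := (bsT n)⁻¹) (b := bsA n) (i := m)).symm

def BS.toDihedral : BS (-1) →* DihedralGroup 0 :=
  PresentedGroup.toGroup (f := fun b => if b then sr 0 else r 1) (by
    rintro _ rfl
    decide)

theorem BS.toDihedral_bsA : BS.toDihedral (bsA (-1)) = r 1 := rfl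

theorem prod_ofFn_conj_bsA_zpow (k : ℕ) (s : Fin k → ℤ) (T : Finset (Fin k)) :
    (List.ofFn fun i => (if i ∈ T then 1 else bsT (-1))⁻¹ * bsA (-1) ^ s i *
      (if i ∈ T then 1 else bsT (-1))).prod = bsA (-1) ^ ∑ i, (if i ∈ T then s i else -s i) := by
  rw [← List.prod_ofFn_zpow]
  congr
  funext i
  split_ifs <;> simp [inv_bsT_mul_bsA_zpow_mul_bsT]

theorem stmt_15_general (k : ℕ) (s : Fin k → ℤ) :
    (∃ T : Finset (Fin k), ∑ i ∈ T, s i = ∑ i ∈ Tᶜ, s i) ↔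
      ∃ z : Fin k → BS (-1),
        (List.ofFn fun i => (z i)⁻¹ * bsA (-1) ^ (s i) * z i).prod = 1 := by
  simp_rw [Finset.sum_eq_sum_compl_iff_sum_ite_neg]
  constructor
  · rintro ⟨T, hT⟩
    exact ⟨_, by rw [prod_ofFn_conj_bsA_zpow k s T, hT, zpow_zero]⟩
  · rintro ⟨z, hz⟩
    -- `ZMod 0` unfolds to `ℤ` but carries its own instances, so the casts are kept explicit.
    obtain ⟨T, hT⟩ :=
      exists_prod_ofFn_inv_mul_r_mul (fun i => BS.toDihedral (z i)) (fun i => Int.cast (s i))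
    have h : r (Int.cast (∑ i, if i ∈ T then s i else -s i) : ZMod 0) = r 0 := by
      rw [r_zero, ← map_one BS.toDihedral, ← hz, map_list_prod, List.map_ofFn]
      push_cast
      rw [← hT]
      congr
      funext i
      simp [BS.toDihedral_bsA]
    refine ⟨T, ?_⟩
    exact_mod_cast r.inj h

/-- A multiset `{s₁,…,s_k}` of positive integers can be partitioned into two
submultisets with equal sums iff the equation `z₁⁻¹a^{s₁}z₁ ⋯ z_k⁻¹a^{s_k}z_k = 1`
has a solution in BS(1,-1). -/
theorem stmt_15 (k : ℕ) (s : Fin k → ℤ) (hs : ∀ i, 0 < s i) :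
    (∃ T : Finset (Fin k), ∑ i ∈ T, s i = ∑ i ∈ Tᶜ, s i) ↔
      ∃ z : Fin k → BS (-1),
        (List.ofFn fun i => (z i)⁻¹ * bsA (-1) ^ (s i) * z i).prod = 1 :=
  stmt_15_general k s
end
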